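/- If r·cos θ ≤ ε < r, then the complement ℝ³ \ S_ε has exactly one connected component that is a bounded set, and the origin (0,0,0) belongs to that bounded component (a ball of radius ε is caged by S). -/

import Mathlib

/-!
The open region `U = {‖x‖ < r, x₂ < r sin θ}` is a cage: its boundary consists of `S` and of the
flat disc spanning the rim circle, and every point of that disc lies within `r cos θ ≤ ε` of the
rim. So the complement `K` of `S_ε` is split by the disjoint open sets `U` and
`V = {‖x‖ > r} ∪ {x₂ > r sin θ}`, and the component of the origin stays in `U`.
Every point `p` of `K ∩ U` satisfies `‖p‖² + ε² < r²`, which is exactly what keeps the segment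
from `p` to the origin away from every ball `B(w, ε)`, `‖w‖ = r`. From a point of `K ∩ V`, the
outward radial ray, resp. the upward vertical ray, only moves away from every point of `S`,
so its component is unbounded.
-/

open Metric Set Bornology Real

section General

variable {E : Type*} [NormedAddCommGroup E] [InnerProductSpace ℝ E]

theorem IsCompact.mem_compl_cthickening_iff {α : Type*} [PseudoMetricSpace α] {s : Set α}
    (hs : IsCompact s) {δ : ℝ} (hδ : 0 ≤ δ) {x : α} :
    x ∈ (cthickening δ s)ᶜ ↔ ∀ y ∈ s, δ < dist x y := by
  simp [hs.cthickening_eq_biUnion_closedBall hδ]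

theorem dist_le_dist_add_smul_of_inner_nonneg {p v w : E} (h : 0 ≤ inner ℝ (p - w) v)
    {t : ℝ} (ht : 0 ≤ t) : dist p w ≤ dist (p + t • v) w := by
  rw [dist_eq_norm, dist_eq_norm, add_sub_right_comm,
    ← sq_le_sq₀ (norm_nonneg _) (norm_nonneg _), norm_add_sq_real, real_inner_smul_right,
    norm_smul, Real.norm_of_nonneg ht]
  nlinarith [mul_nonneg ht h]

theorem lt_dist_smul_of_sq_add_sq_lt {p w : E} {ε t : ℝ} (hε : 0 ≤ ε) (hpw : ε < dist p w)
    (hp : ‖p‖ ^ 2 + ε ^ 2 < ‖w‖ ^ 2) (ht₀ : 0 ≤ t) (ht₁ : t ≤ 1) : ε < dist (t • p) w := by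
  have hpw2 : ε ^ 2 < ‖p - w‖ ^ 2 := by rw [← dist_eq_norm]; gcongr
  rw [dist_eq_norm, ← sq_lt_sq₀ hε (norm_nonneg _)]
  have hcombination : ‖t • p - w‖ ^ 2 - ε ^ 2
      = t * (‖p - w‖ ^ 2 - ε ^ 2) + (1 - t) * (‖w‖ ^ 2 - ε ^ 2 - t * ‖p‖ ^ 2) := by
    rw [norm_sub_sq_real, norm_sub_sq_real, real_inner_smul_left, norm_smul,
      Real.norm_of_nonneg ht₀]
    ring
  have htp : t * ‖p‖ ^ 2 ≤ ‖p‖ ^ 2 := mul_le_of_le_one_left (sq_nonneg _) ht₁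
  rcases ht₀.eq_or_lt with rfl | ht₀
  · linarith [sq_nonneg ‖p‖]
  · nlinarith [mul_pos ht₀ (sub_pos.2 hpw2),
      mul_nonneg (sub_nonneg.2 ht₁) (by linarith : 0 ≤ ‖w‖ ^ 2 - ε ^ 2 - t * ‖p‖ ^ 2)]

theorem not_isBounded_connectedComponentIn_of_ray {F : Set E} {p v : E} (hv : v ≠ 0)
    (hray : ∀ t : ℝ, 0 ≤ t → p + t • v ∈ F) : ¬IsBounded (connectedComponentIn F p) := by
  have hp : p ∈ (fun t : ℝ => p + t • v) '' Ici 0 := ⟨0, self_mem_Ici, by simp⟩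
  have hsub : (fun t : ℝ => p + t • v) '' Ici 0 ⊆ connectedComponentIn F p :=
    (isPreconnected_Ici.image _ (by fun_prop)).subset_connectedComponentIn hp
      (image_subset_iff.2 hray)
  intro hbdd
  obtain ⟨C, hC⟩ := isBounded_iff_forall_norm_le.1 (hbdd.subset hsub)
  have hv' : 0 < ‖v‖ := norm_pos_iff.2 hv
  have hC₀ : 0 ≤ C := (norm_nonneg p).trans (hC p hp)
  set t := (C + ‖p‖ + 1) / ‖v‖
  have ht : 0 ≤ t := by positivity
  have htv : ‖t • v‖ = C + ‖p‖ + 1 := by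
    rw [norm_smul, Real.norm_of_nonneg ht, div_mul_cancel₀ _ hv'.ne']
  have htriangle := norm_le_add_norm_add (t • v) p
  rw [add_comm (t • v)] at htriangle
  linarith [hC _ ⟨t, ht, rfl⟩]

end General

namespace EuclideanSpace

theorem norm_sq_eq_fin_three (x : EuclideanSpace ℝ (Fin 3)) :
    ‖x‖ ^ 2 = x 0 ^ 2 + x 1 ^ 2 + x 2 ^ 2 := by
  simp [EuclideanSpace.norm_sq_eq, Fin.sum_univ_three]

theorem dist_sq_eq_fin_three (x y : EuclideanSpace ℝ (Fin 3)) :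
    dist x y ^ 2 = (x 0 - y 0) ^ 2 + (x 1 - y 1) ^ 2 + (x 2 - y 2) ^ 2 := by
  rw [dist_eq_norm, norm_sq_eq_fin_three]; rfl

end EuclideanSpace

def capRemovedSphere (r θ : ℝ) : Set (EuclideanSpace ℝ (Fin 3)) :=
  {p | ‖p‖ = r ∧ p 2 ≤ r * sin θ}

noncomputable def horizontalNorm (x : EuclideanSpace ℝ (Fin 3)) : ℝ := √(x 0 ^ 2 + x 1 ^ 2)

theorem horizontalNorm_nonneg (x : EuclideanSpace ℝ (Fin 3)) : 0 ≤ horizontalNorm x :=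
  sqrt_nonneg _

theorem horizontalNorm_sq_add_sq (x : EuclideanSpace ℝ (Fin 3)) :
    horizontalNorm x ^ 2 + x 2 ^ 2 = ‖x‖ ^ 2 := by
  rw [horizontalNorm, sq_sqrt (by positivity), EuclideanSpace.norm_sq_eq_fin_three]

theorem isCompact_capRemovedSphere (r θ : ℝ) : IsCompact (capRemovedSphere r θ) := by
  have : capRemovedSphere r θ = sphere 0 r ∩ {p | p 2 ≤ r * sin θ} := by
    ext p; simp [capRemovedSphere]
  rw [this]
  exact (isCompact_sphere 0 r).inter_right (isClosed_le (by fun_prop) continuous_const)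

theorem exists_mem_capRemovedSphere_dist_sq_eq {r : ℝ} (hr : 0 ≤ r) (θ : ℝ)
    (x : EuclideanSpace ℝ (Fin 3)) :
    ∃ w ∈ capRemovedSphere r θ,
      dist x w ^ 2 = (horizontalNorm x - r * cos θ) ^ 2 + (x 2 - r * sin θ) ^ 2 := by
  set z : ℂ := ⟨x 0, x 1⟩
  have hz : ‖z‖ = horizontalNorm x := by
    rw [Complex.norm_def, Complex.normSq_apply, horizontalNorm, sq, sq]
  set w : EuclideanSpace ℝ (Fin 3) :=
    !₂[r * cos θ * cos z.arg, r * cos θ * sin z.arg, r * sin θ]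
  have hw : ‖w‖ ^ 2 = r ^ 2 := by
    rw [EuclideanSpace.norm_sq_eq_fin_three]
    simp only [w, Matrix.cons_val_zero, Matrix.cons_val_one, Matrix.cons_val_two,
      Matrix.head_cons, Matrix.tail_cons]
    linear_combination (r * cos θ) ^ 2 * sin_sq_add_cos_sq z.arg + r ^ 2 * sin_sq_add_cos_sq θ
  refine ⟨w, ⟨(sq_eq_sq₀ (norm_nonneg _) hr).1 hw, le_rfl⟩, ?_⟩
  have h0 : x 0 = horizontalNorm x * cos z.arg := by rw [← hz, Complex.norm_mul_cos_arg]
  have h1 : x 1 = horizontalNorm x * sin z.arg := by rw [← hz, Complex.norm_mul_sin_arg]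
  rw [EuclideanSpace.dist_sq_eq_fin_three]
  simp only [w, Matrix.cons_val_zero, Matrix.cons_val_one, Matrix.cons_val_two,
    Matrix.head_cons, Matrix.tail_cons]
  rw [h0, h1]
  linear_combination (horizontalNorm x - r * cos θ) ^ 2 * sin_sq_add_cos_sq z.arg

def cageInterior (r θ : ℝ) : Set (EuclideanSpace ℝ (Fin 3)) :=
  {x | ‖x‖ < r ∧ x 2 < r * sin θ}

def cageExterior (r θ : ℝ) : Set (EuclideanSpace ℝ (Fin 3)) :=
  {x | r < ‖x‖ ∨ r * sin θ < x 2}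

theorem isOpen_cageInterior (r θ : ℝ) : IsOpen (cageInterior r θ) :=
  (isOpen_lt continuous_norm continuous_const).inter
    (isOpen_lt (f := fun x : EuclideanSpace ℝ (Fin 3) => x 2) (by fun_prop) continuous_const)

theorem isOpen_cageExterior (r θ : ℝ) : IsOpen (cageExterior r θ) :=
  (isOpen_lt continuous_const continuous_norm).union
    (isOpen_lt (g := fun x : EuclideanSpace ℝ (Fin 3) => x 2) continuous_const (by fun_prop))

theorem disjoint_cageInterior_cageExterior (r θ : ℝ) :
    Disjoint (cageInterior r θ) (cageExterior r θ) := by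
  rw [Set.disjoint_left]
  rintro x ⟨hx₁, hx₂⟩ (hx | hx) <;> linarith

theorem cageInterior_subset_ball (r θ : ℝ) : cageInterior r θ ⊆ ball 0 r :=
  fun _ hx => mem_ball_zero_iff.2 hx.1

section Cage

variable {r θ ε : ℝ}

theorem mem_compl_cthickening_capRemovedSphere (hε : 0 ≤ ε) {x : EuclideanSpace ℝ (Fin 3)} :
    x ∈ (cthickening ε (capRemovedSphere r θ))ᶜ ↔ ∀ w ∈ capRemovedSphere r θ, ε < dist x w :=
  (isCompact_capRemovedSphere r θ).mem_compl_cthickening_iff hε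

theorem compl_cthickening_subset_cageInterior_union_cageExterior (hcos : 0 ≤ cos θ)
    (hε : r * cos θ ≤ ε) :
    (cthickening ε (capRemovedSphere r θ))ᶜ ⊆ cageInterior r θ ∪ cageExterior r θ := by
  intro x hx
  have hfar : ∀ w ∈ capRemovedSphere r θ, ε < dist x w := fun w hw =>
    lt_of_not_ge fun h => hx (mem_cthickening_of_dist_le x w ε _ hw h)
  rcases lt_or_ge r ‖x‖ with hxr | hxr
  · exact Or.inr (Or.inl hxr)
  rcases lt_or_ge (r * sin θ) (x 2) with hx₂ | hx₂
  · exact Or.inr (Or.inr hx₂)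
  have hr : 0 ≤ r := (norm_nonneg x).trans hxr
  have hrε : 0 ≤ ε := (mul_nonneg hr hcos).trans hε
  refine Or.inl ⟨hxr.lt_of_ne fun h => ?_, hx₂.lt_of_ne fun h => ?_⟩
  · exact (hfar x ⟨h, hx₂⟩).not_ge (by simpa using hrε)
  · -- the rim point at the longitude of `x` is within `r cos θ` of `x`
    obtain ⟨w, hw, hdist⟩ := exists_mem_capRemovedSphere_dist_sq_eq hr θ x
    have ha := horizontalNorm_nonneg x
    have har : horizontalNorm x ≤ r * cos θ := by
      rw [← sq_le_sq₀ ha (mul_nonneg hr hcos)]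
      have hxr2 : ‖x‖ ^ 2 ≤ r ^ 2 := pow_le_pow_left₀ (norm_nonneg x) hxr 2
      have := horizontalNorm_sq_add_sq x
      rw [h] at this
      nlinarith [sin_sq_add_cos_sq θ]
    have hxw := hfar w hw
    nlinarith [dist_nonneg (x := x) (y := w)]

theorem exists_mem_capRemovedSphere_dist_sq_le (hsin : 0 ≤ sin θ) (hcos : 0 ≤ cos θ)
    {x : EuclideanSpace ℝ (Fin 3)} (hx : x ∈ cageInterior r θ) :
    ∃ w ∈ capRemovedSphere r θ, dist x w ^ 2 ≤ r ^ 2 - ‖x‖ ^ 2 := by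
  obtain ⟨hxr, hx₂⟩ := hx
  have hr : 0 ≤ r := (norm_nonneg x).trans hxr.le
  rcases lt_or_ge (x 2) (‖x‖ * sin θ) with hbelow | habove
  · -- below the cone over the rim, project radially
    have hs : 0 < ‖x‖ := norm_pos_iff.2 fun h => by simp [h] at hbelow
    have hw : (r / ‖x‖) • x ∈ capRemovedSphere r θ := by
      refine ⟨by rw [norm_smul, Real.norm_of_nonneg (by positivity), div_mul_cancel₀ _ hs.ne'], ?_⟩
      calc ((r / ‖x‖) • x) 2 = r / ‖x‖ * x 2 := rfl
        _ ≤ r / ‖x‖ * (‖x‖ * sin θ) := by gcongr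
        _ = r * sin θ := by field_simp
    refine ⟨_, hw, ?_⟩
    rw [dist_eq_norm, norm_sub_sq_real, hw.1, real_inner_smul_right, real_inner_self_eq_norm_sq]
    field_simp
    nlinarith
  · -- above the cone, use the rim point at the same longitude
    obtain ⟨w, hw, hdist⟩ := exists_mem_capRemovedSphere_dist_sq_eq hr θ x
    refine ⟨w, hw, hdist.trans_le ?_⟩
    have ha := horizontalNorm_nonneg x
    have hsum := horizontalNorm_sq_add_sq x
    have hx₂' : 0 ≤ x 2 := (mul_nonneg (norm_nonneg x) hsin).trans habove
    have har : horizontalNorm x ≤ r * cos θ := by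
      have : horizontalNorm x ≤ ‖x‖ * cos θ := by
        rw [← sq_le_sq₀ ha (by positivity)]
        nlinarith [sin_sq_add_cos_sq θ, mul_le_mul habove habove (by positivity) hx₂']
      exact this.trans (mul_le_mul_of_nonneg_right hxr.le hcos)
    nlinarith [mul_nonneg ha (sub_nonneg.2 har), mul_nonneg hx₂' (sub_nonneg.2 hx₂.le),
      sin_sq_add_cos_sq θ]

theorem zero_mem_connectedComponentIn_of_mem_cageInterior (hsin : 0 ≤ sin θ)
    (hcos : 0 ≤ cos θ) (hε : 0 ≤ ε) {p : EuclideanSpace ℝ (Fin 3)}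
    (hp : p ∈ (cthickening ε (capRemovedSphere r θ))ᶜ) (hpU : p ∈ cageInterior r θ) :
    0 ∈ connectedComponentIn (cthickening ε (capRemovedSphere r θ))ᶜ p := by
  rw [mem_compl_cthickening_capRemovedSphere hε] at hp
  obtain ⟨w₀, hw₀, hdist⟩ := exists_mem_capRemovedSphere_dist_sq_le hsin hcos hpU
  have hpε : ‖p‖ ^ 2 + ε ^ 2 < r ^ 2 := by
    have := pow_lt_pow_left₀ (hp w₀ hw₀) hε two_ne_zero
    linarith
  have hseg : (fun t : ℝ => t • p) '' Icc 0 1 ⊆ (cthickening ε (capRemovedSphere r θ))ᶜ := by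
    rintro _ ⟨t, ⟨ht₀, ht₁⟩, rfl⟩
    exact (mem_compl_cthickening_capRemovedSphere hε).2 fun w hw =>
      lt_dist_smul_of_sq_add_sq_lt hε (hp w hw) (by rwa [hw.1]) ht₀ ht₁
  exact (isPreconnected_Icc.image _ (by fun_prop)).subset_connectedComponentIn
    ⟨1, right_mem_Icc.2 zero_le_one, one_smul ℝ p⟩ hseg
    ⟨0, left_mem_Icc.2 zero_le_one, zero_smul ℝ p⟩

theorem not_isBounded_connectedComponentIn_of_mem_cageExterior (hr : 0 < r) (hε : 0 ≤ ε)
    {p : EuclideanSpace ℝ (Fin 3)} (hp : p ∈ (cthickening ε (capRemovedSphere r θ))ᶜ)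
    (hpV : p ∈ cageExterior r θ) :
    ¬IsBounded (connectedComponentIn (cthickening ε (capRemovedSphere r θ))ᶜ p) := by
  rw [mem_compl_cthickening_capRemovedSphere hε] at hp
  have hray : ∀ v, (∀ w ∈ capRemovedSphere r θ, 0 ≤ inner ℝ (p - w) v) →
      ∀ t : ℝ, 0 ≤ t → p + t • v ∈ (cthickening ε (capRemovedSphere r θ))ᶜ :=
    fun v hv t ht => (mem_compl_cthickening_capRemovedSphere hε).2 fun w hw =>
      (hp w hw).trans_le (dist_le_dist_add_smul_of_inner_nonneg (hv w hw) ht)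
  rcases hpV with hpr | hp₂
  · refine not_isBounded_connectedComponentIn_of_ray (norm_pos_iff.1 (hr.trans hpr))
      (hray p fun w hw => ?_)
    rw [inner_sub_left, real_inner_self_eq_norm_sq]
    nlinarith [real_inner_le_norm w p, hw.1, norm_nonneg p]
  · refine not_isBounded_connectedComponentIn_of_ray (v := EuclideanSpace.single 2 1)
      (by simp) (hray _ fun w hw => ?_)
    simpa [EuclideanSpace.inner_single_right] using hw.2.trans hp₂.le

end Cage

/-- If `r·cos θ ≤ ε < r`, then the complement of the closed
`ε`-neighborhood of the sphere-with-cap-removed has exactly one connected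
component that is a bounded set, and the origin belongs to that bounded component
(a ball of radius `ε` is caged by `S`). -/
theorem sphere_with_cap_removed_unique_bounded_component
    (r θ ε : ℝ) (hr : 0 < r) (hθ : θ ∈ Set.Ioo 0 (Real.pi / 2))
    (S : Set (EuclideanSpace ℝ (Fin 3)))
    (hS : S = {p : EuclideanSpace ℝ (Fin 3) | ‖p‖ = r ∧ p 2 ≤ r * Real.sin θ})
    (hε1 : r * Real.cos θ ≤ ε) (hε2 : ε < r) :
    (∃! C : Set (EuclideanSpace ℝ (Fin 3)),
        (∃ p ∈ (Metric.cthickening ε S)ᶜ,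
          C = connectedComponentIn (Metric.cthickening ε S)ᶜ p) ∧
        Bornology.IsBounded C) ∧
      (0 : EuclideanSpace ℝ (Fin 3)) ∈ (Metric.cthickening ε S)ᶜ ∧
      Bornology.IsBounded
        (connectedComponentIn (Metric.cthickening ε S)ᶜ
          (0 : EuclideanSpace ℝ (Fin 3))) := by
  obtain rfl : S = capRemovedSphere r θ := hS
  have hsin : 0 < sin θ := sin_pos_of_pos_of_lt_pi hθ.1 (by linarith [hθ.2, pi_pos])
  have hcos : 0 < cos θ := cos_pos_of_mem_Ioo ⟨by linarith [hθ.1, pi_pos], hθ.2⟩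
  have hε : 0 ≤ ε := (mul_pos hr hcos).le.trans hε1
  set K := (cthickening ε (capRemovedSphere r θ))ᶜ
  have hsplit := compl_cthickening_subset_cageInterior_union_cageExterior hcos.le hε1
  have h0K : (0 : EuclideanSpace ℝ (Fin 3)) ∈ K :=
    (mem_compl_cthickening_capRemovedSphere hε).2 fun w hw => by
      rwa [dist_comm, dist_zero_right, hw.1]
  have h0U : (0 : EuclideanSpace ℝ (Fin 3)) ∈ cageInterior r θ := by
    simp [cageInterior, hr, hsin]
  have hC₀ : connectedComponentIn K 0 ⊆ cageInterior r θ :=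
    isPreconnected_connectedComponentIn.subset_left_of_subset_union (isOpen_cageInterior r θ)
      (isOpen_cageExterior r θ) (disjoint_cageInterior_cageExterior r θ)
      ((connectedComponentIn_subset _ _).trans hsplit) ⟨0, mem_connectedComponentIn h0K, h0U⟩
  have hbdd : IsBounded (connectedComponentIn K 0) :=
    isBounded_ball.subset (hC₀.trans (cageInterior_subset_ball r θ))
  refine ⟨⟨_, ⟨⟨0, h0K, rfl⟩, hbdd⟩, ?_⟩, h0K, hbdd⟩
  rintro _ ⟨⟨p, hpK, rfl⟩, hpbdd⟩
  rcases hsplit hpK with hpU | hpV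
  · exact connectedComponentIn_eq
      (zero_mem_connectedComponentIn_of_mem_cageInterior hsin.le hcos.le hε hpK hpU)
  · exact absurd hpbdd (not_isBounded_connectedComponentIn_of_mem_cageExterior hr hε hpK hpV)
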